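/- arXiv:2107.05536 — 4 statements merged into one kernel-verified Lean document; each statement's English description precedes it below -/
import Mathlib

section
/- Let N > 2 and c ∈ (0,1). Suppose X : [t₂, T) → ℝ is differentiable, X(t₂) > N - 2, and X'(t) ≥ X(t)(X(t) - (N-2)) for all t in [t₂, T). If c = 1 - (N-2)/X(t₂), then X(t) ≥ (N-2)/(1 - c·e^{(N-2)(t - t₂)}) for all t in [t₂, T) with t - t₂ < -ln(c)/(N-2). In particular X blows up in finite time, i.e. T ≤ t₂ - ln(c)/(N-2). -/
/-!
Put `K = N - 2`. Where `X` equals its initial value `X t₂ > K` its derivative is strictly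
positive, so `X` never drops below `X t₂`; in particular `X > 0`. Then
`(1 - K / X s) e^{-K (s - t₂)}` has derivative `K e^{-K (s - t₂)} (X' - X (X - K)) / X² ≥ 0`, so it
is at least its initial value `c`, i.e. `K / X t ≤ 1 - c e^{K (t - t₂)}`. The left side is
positive, which gives the lower bound for `X` and rules out reaching the time
`t₂ - log c / K` at which the right side vanishes.
-/

open Real Set

variable {K a b : ℝ} {X X' : ℝ → ℝ}

theorem le_of_riccati_supersolution (hK : 0 ≤ K)
    (hderiv : ∀ t ∈ Ico a b, HasDerivAt X (X' t) t)
    (hineq : ∀ t ∈ Ico a b, X t * (X t - K) ≤ X' t) (hXa : K < X a) :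
    ∀ t ∈ Ico a b, X a ≤ X t := by
  intro t ht
  have hcont : ContinuousOn (fun s => -X s) (Icc a t) := fun s hs =>
    (hderiv s ⟨hs.1, hs.2.trans_lt ht.2⟩).continuousAt.neg.continuousWithinAt
  have hderiv' : ∀ s ∈ Ico a t, HasDerivWithinAt (fun s => -X s) (-X' s) (Ici s) s :=
    fun s hs => (hderiv s ⟨hs.1, hs.2.trans ht.2⟩).neg.hasDerivWithinAt
  have hbound : ∀ s ∈ Ico a t, -X s = -X a → -X' s < 0 := by
    intro s hs hXs
    have hXs : X s = X a := neg_injective hXs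
    have := hineq s ⟨hs.1, hs.2.trans ht.2⟩
    rw [hXs] at this
    nlinarith
  have := image_le_of_deriv_right_lt_deriv_boundary hcont hderiv' le_rfl
    (fun _ => hasDerivAt_const _ (-X a)) hbound ⟨ht.1, le_rfl⟩
  exact neg_le_neg_iff.mp this

theorem monotoneOn_riccati_supersolution (hK : 0 ≤ K)
    (hderiv : ∀ t ∈ Ico a b, HasDerivAt X (X' t) t)
    (hineq : ∀ t ∈ Ico a b, X t * (X t - K) ≤ X' t) (hpos : ∀ t ∈ Ico a b, 0 < X t) :
    MonotoneOn (fun s => (1 - K / X s) * exp (-(K * (s - a)))) (Ico a b) := by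
  have hv : ∀ t ∈ Ico a b, HasDerivAt (fun s => (1 - K / X s) * exp (-(K * (s - a))))
      (K * exp (-(K * (t - a))) * (X' t - X t * (X t - K)) / X t ^ 2) t := by
    intro t ht
    have hX := (hpos t ht).ne'
    have hexp : HasDerivAt (fun s => exp (-(K * (s - a)))) (exp (-(K * (t - a))) * -K) t := by
      simpa using (((hasDerivAt_id t).sub_const a).const_mul K).neg.exp
    refine ((((hasDerivAt_const t K).fun_div (hderiv t ht) hX).const_sub 1).fun_mul
      hexp).congr_deriv ?_
    field_simp
    ring
  refine monotoneOn_of_hasDerivWithinAt_nonneg (convex_Ico a b)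
    (fun t ht => (hv t ht).continuousAt.continuousWithinAt)
    (fun t ht => (hv t (interior_subset ht)).hasDerivWithinAt) fun t ht => ?_
  have ht := interior_subset ht
  have := hineq t ht
  have := hpos t ht
  positivity

theorem riccati_supersolution_ge (hK : 0 < K)
    (hderiv : ∀ t ∈ Ico a b, HasDerivAt X (X' t) t)
    (hineq : ∀ t ∈ Ico a b, X t * (X t - K) ≤ X' t) (hXa : K < X a) :
    ∀ t ∈ Ico a b, (1 - K / X a) * exp (K * (t - a)) < 1 ∧
      K / (1 - (1 - K / X a) * exp (K * (t - a))) ≤ X t := by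
  intro t ht
  have hpos : ∀ s ∈ Ico a b, 0 < X s := fun s hs => by
    linarith [le_of_riccati_supersolution hK.le hderiv hineq hXa s hs]
  have hmono := monotoneOn_riccati_supersolution hK.le hderiv hineq hpos
    ⟨le_rfl, ht.1.trans_lt ht.2⟩ ht ht.1
  simp only [sub_self, mul_zero, neg_zero, exp_zero, mul_one] at hmono
  rw [exp_neg, ← div_eq_mul_inv, le_div_iff₀ (exp_pos _)] at hmono
  have hKX : 0 < K / X t := div_pos hK (hpos t ht)
  refine ⟨by linarith, ?_⟩
  rw [div_le_iff₀ (by linarith), ← div_le_iff₀' (hpos t ht)]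
  linarith

theorem stmt_4_general (N c t₂ T : ℝ) (hN : 2 < N) (hc0 : 0 < c) (hc1 : c < 1)
    (X X' : ℝ → ℝ)
    (hderiv : ∀ t ∈ Set.Ico t₂ T, HasDerivAt X (X' t) t)
    (hX0 : N - 2 < X t₂)
    (hineq : ∀ t ∈ Set.Ico t₂ T, X t * (X t - (N - 2)) ≤ X' t)
    (hc : c = 1 - (N - 2) / X t₂) :
    (∀ t ∈ Set.Ico t₂ T, t - t₂ < -Real.log c / (N - 2) →
      (N - 2) / (1 - c * Real.exp ((N - 2) * (t - t₂))) ≤ X t) ∧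
    T ≤ t₂ - Real.log c / (N - 2) := by
  have hK : 0 < N - 2 := sub_pos.2 hN
  have hbound := riccati_supersolution_ge hK hderiv hineq hX0
  rw [← hc] at hbound
  refine ⟨fun t ht _ => (hbound t ht).2, ?_⟩
  by_contra! hT
  have hτ : t₂ ≤ t₂ - log c / (N - 2) := by
    linarith [div_neg_of_neg_of_pos (log_neg hc0 hc1) hK]
  have hblowup := (hbound _ ⟨hτ, hT⟩).1
  rw [show (N - 2) * (t₂ - log c / (N - 2) - t₂) = -log c by field_simp; ring, exp_neg,
    exp_log hc0, mul_inv_cancel₀ hc0.ne'] at hblowup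
  exact lt_irrefl 1 hblowup

theorem stmt_4 (N c t₂ T : ℝ) (hN : 2 < N) (hc0 : 0 < c) (hc1 : c < 1)
    (hT : t₂ < T) (X X' : ℝ → ℝ)
    (hderiv : ∀ t ∈ Set.Ico t₂ T, HasDerivAt X (X' t) t)
    (hX0 : N - 2 < X t₂)
    (hineq : ∀ t ∈ Set.Ico t₂ T, X t * (X t - (N - 2)) ≤ X' t)
    (hc : c = 1 - (N - 2) / X t₂) :
    (∀ t ∈ Set.Ico t₂ T, t - t₂ < -Real.log c / (N - 2) →
      (N - 2) / (1 - c * Real.exp ((N - 2) * (t - t₂))) ≤ X t) ∧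
    T ≤ t₂ - Real.log c / (N - 2) :=
  stmt_4_general N c t₂ T hN hc0 hc1 X X' hderiv hX0 hineq hc
end

section
/- Let w be a real-valued differentiable function on [t₀, ∞) satisfying w'(t) = -w(t)²/Λ + O(w(t)³) as w → 0 (precisely: |w'(t) + w(t)²/Λ| ≤ C|w(t)|³ for small |w|), with w(t) > 0 and w(t) → 0 as t → ∞. Then t·w(t) → Λ as t → ∞. -/
open Filter Set

theorem stmt_11 (Lam C t₀ : ℝ) (hLam : 0 < Lam) (hC : 0 < C)
    (w w' : ℝ → ℝ)
    (hderiv : ∀ t ≥ t₀, HasDerivAt w (w' t) t)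
    (hpos : ∀ t ≥ t₀, 0 < w t)
    (hlim : Filter.Tendsto w Filter.atTop (nhds 0))
    (hineq : ∃ T : ℝ, ∀ t ≥ T, |w' t + (w t) ^ 2 / Lam| ≤ C * |w t| ^ 3) :
    Filter.Tendsto (fun t => t * w t) Filter.atTop (nhds Lam) := by
  obtain ⟨T₀, hT₀⟩ := hineq
  set v : ℝ → ℝ := fun t => (w t)⁻¹ with hv
  -- Step 1: v t / t → Lam⁻¹
  have step1 : Tendsto (fun t => v t / t) atTop (nhds Lam⁻¹) := by
    rw [Metric.tendsto_atTop]
    intro ε hε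
    set δ : ℝ := ε / 3 with hδdef
    have hδ : 0 < δ := by positivity
    -- eventually C * w t ≤ δ
    obtain ⟨T₁, hT₁⟩ := Metric.tendsto_atTop.mp hlim (δ / C) (by positivity)
    set T : ℝ := max (max t₀ T₀) (max T₁ 0) with hTdef
    have hT0 : (0:ℝ) ≤ T := le_trans (le_max_right _ _) (le_max_right _ _)
    -- derivative bound on [T, ∞)
    have hrange : ∀ x ≥ T, t₀ ≤ x ∧ T₀ ≤ x ∧ T₁ ≤ x := by
      intro x hx
      refine ⟨le_trans (le_trans (le_max_left _ _) (le_max_left _ _)) hx,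
        le_trans (le_trans (le_max_right _ _) (le_max_left _ _)) hx,
        le_trans (le_trans (le_max_left _ _) (le_max_right _ _)) hx⟩
    have hdb : ∀ x ≥ T, |(-(w' x) / (w x) ^ 2 - Lam⁻¹)| ≤ δ := by
      intro x hx
      obtain ⟨h0, h1, h2⟩ := hrange x hx
      have hw : 0 < w x := hpos x h0
      have hwne : w x ≠ 0 := ne_of_gt hw
      have key := hT₀ x h1
      have hsmall : C * w x ≤ δ := by
        have := hT₁ x h2
        rw [Real.dist_eq, sub_zero, abs_of_pos hw] at this
        calc C * w x ≤ C * (δ / C) := by nlinarith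
          _ = δ := by field_simp
      have heq : -(w' x) / (w x) ^ 2 - Lam⁻¹ = -((w' x + (w x) ^ 2 / Lam) / (w x) ^ 2) := by
        field_simp
        ring
      rw [heq, abs_neg, abs_div, abs_of_pos (by positivity : (0:ℝ) < (w x)^2)]
      rw [div_le_iff₀ (by positivity)]
      calc |w' x + w x ^ 2 / Lam| ≤ C * |w x| ^ 3 := key
        _ = (C * w x) * (w x)^2 := by rw [abs_of_pos hw]; ring
        _ ≤ δ * (w x) ^ 2 := by nlinarith [sq_nonneg (w x)]
    -- MVT: for t ≥ T, |v t - v T - (t - T) * Lam⁻¹| ≤ δ * (t - T)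
    have hmvt : ∀ t ≥ T, |v t - v T - (t - T) * Lam⁻¹| ≤ δ * (t - T) := by
      intro t ht
      set g : ℝ → ℝ := fun s => v s - s * Lam⁻¹ with hg
      set g' : ℝ → ℝ := fun s => -(w' s) / (w s) ^ 2 - Lam⁻¹ with hg'
      have hgd : ∀ x ∈ Icc T t, HasDerivWithinAt g (g' x) (Icc T t) x := by
        intro x hx
        have hxT : T ≤ x := hx.1
        have h0 := (hrange x hxT).1
        have hd : HasDerivAt g (g' x) x := by
          have h1 : HasDerivAt (fun s => (w s)⁻¹) (-(w' x) / (w x) ^ 2) x :=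
            (hderiv x h0).inv (ne_of_gt (hpos x h0))
          have h2 : HasDerivAt (fun s : ℝ => s * Lam⁻¹) Lam⁻¹ x := by
            simpa using (hasDerivAt_id x).mul_const Lam⁻¹
          exact h1.sub h2
        exact hd.hasDerivWithinAt
      have hbound : ∀ x ∈ Ico T t, ‖g' x‖ ≤ δ := fun x hx => hdb x hx.1
      have := norm_image_sub_le_of_norm_deriv_le_segment' hgd hbound t ⟨ht, le_refl t⟩
      simp only [hg, Real.norm_eq_abs] at this
      calc |v t - v T - (t - T) * Lam⁻¹| = |(v t - t * Lam⁻¹) - (v T - T * Lam⁻¹)| := by ring_nf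
        _ ≤ δ * (t - T) := this
    -- conclude
    set K : ℝ := |v T - T * Lam⁻¹| with hK
    refine ⟨max T (max 1 (K / δ)), fun t ht => ?_⟩
    have htT : T ≤ t := le_trans (le_max_left _ _) ht
    have ht1 : (1:ℝ) ≤ t := le_trans (le_trans (le_max_left _ _) (le_max_right _ _)) ht
    have htK : K / δ ≤ t := le_trans (le_trans (le_max_right _ _) (le_max_right _ _)) ht
    have htpos : 0 < t := lt_of_lt_of_le one_pos ht1
    rw [Real.dist_eq]
    have h1 := hmvt t htT
    have : |v t / t - Lam⁻¹| ≤ δ + K / t := by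
      have heq : v t / t - Lam⁻¹ = (v t - v T - (t - T) * Lam⁻¹) / t + (v T - T * Lam⁻¹) / t := by
        field_simp
        ring
      rw [heq]
      calc |(v t - v T - (t - T) * Lam⁻¹) / t + (v T - T * Lam⁻¹) / t|
          ≤ |(v t - v T - (t - T) * Lam⁻¹) / t| + |(v T - T * Lam⁻¹) / t| := abs_add_le _ _
        _ = |v t - v T - (t - T) * Lam⁻¹| / t + K / t := by
            rw [abs_div, abs_div, abs_of_pos htpos]
        _ ≤ δ * (t - T) / t + K / t := by
            gcongr
        _ ≤ δ + K / t := by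
            have : δ * (t - T) / t ≤ δ := by
              rw [div_le_iff₀ htpos]
              nlinarith [htT, hδ.le, hT0]
            linarith
    have hKt : K / t ≤ δ := by
      rw [div_le_iff₀ htpos]
      calc K = (K / δ) * δ := by field_simp
        _ ≤ t * δ := by gcongr
        _ = δ * t := by ring
    calc |v t / t - Lam⁻¹| ≤ δ + K / t := this
      _ ≤ δ + δ := by linarith
      _ < ε := by rw [hδdef]; linarith
  -- Step 2
  have h2 := step1.inv₀ (by positivity : Lam⁻¹ ≠ 0)
  rw [inv_inv] at h2
  apply h2.congr'
  filter_upwards [eventually_ge_atTop (max t₀ 1)] with t ht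
  have h0 : t₀ ≤ t := le_trans (le_max_left _ _) ht
  have h1 : (1:ℝ) ≤ t := le_trans (le_max_right _ _) ht
  have hw := hpos t h0
  simp only [hv]
  rw [inv_div, div_eq_mul_inv, inv_inv]
end

section
/- Suppose X, Y : (-∞, T*) → (0, ∞) are differentiable and satisfy, for all t, the inequality (d/dt) ln(X/Y) ≥ X - Y - A for a constant A > 0. Suppose at some time T_ε < T* we have X(T_ε) = 2A and X is nondecreasing on [T_ε, T*), and Φ := X/Y satisfies Φ(T_ε) ≥ 2A/ε > 2 for some ε ∈ (0, A). Then Φ is strictly increasing on (T_ε, T*); in particular Φ(t) ≥ 2A/ε > 2 for all t ∈ [T_ε, T*). -/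
theorem stmt_12 (A ε Tε Tstar : ℝ) (hA : 0 < A) (hε0 : 0 < ε) (hεA : ε < A)
    (hTT : Tε < Tstar)
    (X Y Φ Φ' : ℝ → ℝ)
    (hXpos : ∀ t < Tstar, 0 < X t) (hYpos : ∀ t < Tstar, 0 < Y t)
    (hΦ : ∀ t < Tstar, Φ t = X t / Y t)
    (hΦderiv : ∀ t < Tstar, HasDerivAt Φ (Φ' t) t)
    (hineq : ∀ t < Tstar, X t - Y t - A ≤ Φ' t / Φ t)
    (hXTe : X Tε = 2 * A)
    (hXmono : ∀ s ∈ Set.Ico Tε Tstar, ∀ t ∈ Set.Ico Tε Tstar, s ≤ t → X s ≤ X t)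
    (hΦTe : 2 * A / ε ≤ Φ Tε)
    (h2 : 2 < 2 * A / ε) :
    (∀ t ∈ Set.Ioo Tε Tstar, 0 < Φ' t) ∧
    (∀ t ∈ Set.Ico Tε Tstar, 2 * A / ε ≤ Φ t ∧ 2 < Φ t) := by
  set c := 2 * A / ε with hc
  -- key pointwise lemma
  have key : ∀ t, Tε ≤ t → t < Tstar → c ≤ Φ t → 0 < Φ' t := by
    intro t htε htT hct
    have hXt := hXpos t htT
    have hYt := hYpos t htT
    have hΦt : Φ t = X t / Y t := hΦ t htT
    have hΦpos : 0 < Φ t := by rw [hΦt]; positivity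
    have hX2A : 2 * A ≤ X t := by
      rw [← hXTe]
      exact hXmono Tε ⟨le_refl _, hTT⟩ t ⟨htε, htT⟩ htε
    have h1 : Y t * Φ t = X t := by
      rw [hΦt]; field_simp
    have h2' : 2 * A ≤ ε * Φ t := by
      rw [hc] at hct
      calc 2 * A = (2 * A / ε) * ε := by field_simp
        _ ≤ Φ t * ε := by nlinarith
        _ = ε * Φ t := mul_comm _ _
    have hkey2 : A - ε ≤ X t - Y t - A := by
      nlinarith [mul_nonneg (sub_nonneg.mpr h2') hYt.le,
        mul_nonneg (sub_nonneg.mpr hX2A) (by linarith : (0:ℝ) ≤ 2 * A - ε)]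
    have hle : A - ε ≤ Φ' t / Φ t := le_trans hkey2 (hineq t htT)
    have := (le_div_iff₀ hΦpos).mp hle
    nlinarith
  -- local increase
  have loc : ∀ m, Tε ≤ m → m < Tstar → c ≤ Φ m →
      ∀ᶠ u in nhdsWithin m (Set.Ioi m), Φ m < Φ u := by
    intro m h1 h2m h3
    have hd := hΦderiv m h2m
    have hpos := key m h1 h2m h3
    have hs := hasDerivAt_iff_tendsto_slope.mp hd
    have hev : ∀ᶠ u in nhdsWithin m {m}ᶜ, 0 < slope Φ m u :=
      hs.eventually (eventually_gt_nhds hpos)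
    have hmono : nhdsWithin m (Set.Ioi m) ≤ nhdsWithin m {m}ᶜ :=
      nhdsWithin_mono m (fun x hx => ne_of_gt hx)
    filter_upwards [hmono hev, self_mem_nhdsWithin] with u hu hu'
    have hum : 0 < u - m := sub_pos.mpr hu'
    rw [slope_def_field] at hu
    rcases div_pos_iff.mp hu with ⟨hn, _⟩ | ⟨_, hd'⟩
    · linarith
    · linarith
  -- main claim
  have main : ∀ t, Tε ≤ t → t < Tstar → c ≤ Φ t := by
    intro t htε htT
    rcases eq_or_lt_of_le htε with hEq | htlt
    · rw [← hEq]; exact hΦTe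
    set S := {s | s ∈ Set.Icc Tε t ∧ ∀ u ∈ Set.Icc Tε s, c ≤ Φ u} with hS
    have hTεS : Tε ∈ S := by
      refine ⟨⟨le_refl _, le_of_lt htlt⟩, ?_⟩
      intro u hu
      have : u = Tε := le_antisymm hu.2 hu.1
      rw [this]; exact hΦTe
    have hbdd : BddAbove S := ⟨t, fun s hs => hs.1.2⟩
    set m := sSup S with hm
    have hmS_le : m ≤ t := csSup_le ⟨Tε, hTεS⟩ (fun s hs => hs.1.2)
    have hTεm : Tε ≤ m := le_csSup hbdd hTεS
    have hmT : m < Tstar := lt_of_le_of_lt hmS_le htT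
    have hbelow : ∀ u, Tε ≤ u → u < m → c ≤ Φ u := by
      intro u h1 h2u
      obtain ⟨s, hsS, hus⟩ := exists_lt_of_lt_csSup ⟨Tε, hTεS⟩ h2u
      exact hsS.2 u ⟨h1, le_of_lt hus⟩
    have hΦm : c ≤ Φ m := by
      rcases eq_or_lt_of_le hTεm with h | h
      · rw [← h]; exact hΦTe
      · have hcont : ContinuousWithinAt Φ (Set.Iio m) m :=
          ((hΦderiv m hmT).continuousAt).continuousWithinAt
        have hev : ∀ᶠ u in nhdsWithin m (Set.Iio m), c ≤ Φ u := by
          filter_upwards [Ioo_mem_nhdsLT_of_mem (Set.mem_Ioc.mpr ⟨h, le_refl m⟩)] with u hu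
          exact hbelow u hu.1.le hu.2
        exact ge_of_tendsto hcont hev
    have hmS : m ∈ S := by
      refine ⟨⟨hTεm, hmS_le⟩, ?_⟩
      intro u hu
      rcases lt_or_eq_of_le hu.2 with h | h
      · exact hbelow u hu.1 h
      · rw [h]; exact hΦm
    rcases eq_or_lt_of_le hmS_le with hmt | hmt
    · rw [← hmt]; exact hΦm
    · exfalso
      have hloc := loc m hTεm hmT hΦm
      obtain ⟨u', hu'm, hsub⟩ := mem_nhdsGT_iff_exists_Ioc_subset.mp hloc
      set s := min u' t with hs'
      have hms : m < s := lt_min hu'm hmt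
      have hsS : s ∈ S := by
        refine ⟨⟨le_trans hTεm hms.le, min_le_right _ _⟩, ?_⟩
        intro u hu
        rcases le_or_gt u m with h | h
        · exact hmS.2 u ⟨hu.1, h⟩
        · have : u ∈ Set.Ioc m u' := ⟨h, le_trans hu.2 (min_le_left _ _)⟩
          exact le_trans hΦm (le_of_lt (hsub this))
      have := le_csSup hbdd hsS
      linarith
  constructor
  · intro t ht
    exact key t ht.1.le ht.2 (main t ht.1.le ht.2)
  · intro t ht
    have := main t ht.1 ht.2
    exact ⟨this, lt_of_lt_of_le h2 this⟩
end

section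
/- Let N ≥ 3 and let u, v be positive C² functions on (0, R) with u', v' < 0, solving u'' + ((N-1)/r)u' + v(r)^p/λ = 0 and v'' + ((N-1)/r)v' + u(r)^q/λ = 0 on a subinterval where both u'' < 0 and v'' < 0. Define E(r) = r^N (u'v' + v^{p+1}/(λ(p+1)) + u^{q+1}/(λ(q+1)) + (N/(p+1)) v u'/r + (N/(q+1)) u v'/r). Then E'(r) = r^{N-1} u'(r) v'(r) (N/(p+1) + N/(q+1) - (N-2)) on that subinterval. -/
/-!
Differentiate `E` by the product rule and eliminate `u''`, `v''` with the equations. In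
`r^N (u'v')'` the nonlinear parts of `u''v' + u'v''` cancel the derivatives of the potential
terms `v^(p+1)/(λ(p+1))`, `u^(q+1)/(λ(q+1))`; the potential terms produced by `(r^N)'` cancel the
nonlinear part of `(N/(p+1)) r^(N-1) v u''` and of its counterpart for `u`. What is left is a
multiple of `r^(N-1) u'v'`.
-/

open Filter Topology

theorem HasDerivAt.rpow_add_one_div {f : ℝ → ℝ} {f' x p : ℝ} (c : ℝ) (hf : HasDerivAt f f' x)
    (hx : f x ≠ 0) (hp : p + 1 ≠ 0) :
    HasDerivAt (fun y => f y ^ (p + 1) / (c * (p + 1))) (f' * f x ^ p / c) x := by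
  refine ((hf.rpow_const (Or.inl hx)).div_const (c * (p + 1))).congr_deriv ?_
  rw [add_sub_cancel_right, mul_comm c, ← div_div, mul_right_comm f', mul_div_cancel_right₀ _ hp]

noncomputable def radialEnergy (n lam p q : ℝ) (u v u' v' : ℝ → ℝ) (r : ℝ) : ℝ :=
  r ^ n * (u' r * v' r + v r ^ (p + 1) / (lam * (p + 1)) + u r ^ (q + 1) / (lam * (q + 1))
    + n / (p + 1) * v r * u' r / r + n / (q + 1) * u r * v' r / r)

theorem hasDerivAt_radialEnergy {n lam p q r : ℝ} {u v u' v' u'' v'' : ℝ → ℝ}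
    (hr : r ≠ 0) (hp : p + 1 ≠ 0) (hq : q + 1 ≠ 0) (hu0 : u r ≠ 0) (hv0 : v r ≠ 0)
    (hu : HasDerivAt u (u' r) r) (hu' : HasDerivAt u' (u'' r) r)
    (hv : HasDerivAt v (v' r) r) (hv' : HasDerivAt v' (v'' r) r)
    (hODEu : u'' r + (n - 1) / r * u' r + v r ^ p / lam = 0)
    (hODEv : v'' r + (n - 1) / r * v' r + u r ^ q / lam = 0) :
    HasDerivAt (radialEnergy n lam p q u v u' v')
      (r ^ (n - 1) * u' r * v' r * (n / (p + 1) + n / (q + 1) - (n - 2))) r := by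
  have hpow : HasDerivAt (fun x : ℝ => x ^ n) (n * r ^ (n - 1)) r :=
    Real.hasDerivAt_rpow_const (Or.inl hr)
  have hbracket := ((((hu'.mul hv').add (hv.rpow_add_one_div lam hv0 hp)).add
    (hu.rpow_add_one_div lam hu0 hq)).add
    ((((hv.const_mul (n / (p + 1))).mul hu').div (hasDerivAt_id r) hr))).add
    ((((hu.const_mul (n / (q + 1))).mul hv').div (hasDerivAt_id r) hr))
  refine (hpow.mul hbracket).congr_deriv ?_
  have hu'' : u'' r = -((n - 1) / r * u' r) - v r ^ p / lam := by linarith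
  have hv'' : v'' r = -((n - 1) / r * v' r) - u r ^ q / lam := by linarith
  have hrn : r ^ n = r ^ (n - 1) * r := by rw [← Real.rpow_add_one hr, sub_add_cancel]
  simp only [Pi.add_apply, Pi.mul_apply, Pi.div_apply, id, hu'', hv'', Real.rpow_add_one hv0,
    Real.rpow_add_one hu0, hrn]
  field_simp
  ring

theorem stmt_17_general (N : ℕ) (lam p q a b : ℝ)
    (hp : 0 < p) (hq : 0 < q) (ha : 0 < a)
    (u v u' v' u'' v'' : ℝ → ℝ)
    (hu : ∀ r ∈ Set.Ioo a b, HasDerivAt u (u' r) r)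
    (hu' : ∀ r ∈ Set.Ioo a b, HasDerivAt u' (u'' r) r)
    (hv : ∀ r ∈ Set.Ioo a b, HasDerivAt v (v' r) r)
    (hv' : ∀ r ∈ Set.Ioo a b, HasDerivAt v' (v'' r) r)
    (hupos : ∀ r ∈ Set.Ioo a b, 0 < u r) (hvpos : ∀ r ∈ Set.Ioo a b, 0 < v r)
    (hODEu : ∀ r ∈ Set.Ioo a b, u'' r + (N - 1) / r * u' r + (v r) ^ p / lam = 0)
    (hODEv : ∀ r ∈ Set.Ioo a b, v'' r + (N - 1) / r * v' r + (u r) ^ q / lam = 0)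
    (E : ℝ → ℝ)
    (hE : ∀ r ∈ Set.Ioo a b, E r = r ^ (N : ℝ) *
      (u' r * v' r + (v r) ^ (p + 1) / (lam * (p + 1)) + (u r) ^ (q + 1) / (lam * (q + 1))
        + (N / (p + 1)) * v r * u' r / r + (N / (q + 1)) * u r * v' r / r)) :
    ∀ r ∈ Set.Ioo a b, HasDerivAt E
      (r ^ ((N : ℝ) - 1) * u' r * v' r * ((N : ℝ) / (p + 1) + (N : ℝ) / (q + 1) - ((N : ℝ) - 2))) r := by
  intro r hr
  have hEeq : E =ᶠ[𝓝 r] radialEnergy N lam p q u v u' v' :=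
    eventually_of_mem (isOpen_Ioo.mem_nhds hr) hE
  refine (hasDerivAt_radialEnergy (ha.trans hr.1).ne' (by positivity) (by positivity)
    (hupos r hr).ne' (hvpos r hr).ne' (hu r hr) (hu' r hr) (hv r hr) (hv' r hr)
    (hODEu r hr) (hODEv r hr)).congr_of_eventuallyEq hEeq

theorem stmt_17 (N : ℕ) (hN : 3 ≤ N) (lam p q a b : ℝ)
    (hlam : 0 < lam) (hp : 0 < p) (hq : 0 < q) (ha : 0 < a) (hab : a < b)
    (u v u' v' u'' v'' : ℝ → ℝ)
    (hu : ∀ r ∈ Set.Ioo a b, HasDerivAt u (u' r) r)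
    (hu' : ∀ r ∈ Set.Ioo a b, HasDerivAt u' (u'' r) r)
    (hv : ∀ r ∈ Set.Ioo a b, HasDerivAt v (v' r) r)
    (hv' : ∀ r ∈ Set.Ioo a b, HasDerivAt v' (v'' r) r)
    (hupos : ∀ r ∈ Set.Ioo a b, 0 < u r) (hvpos : ∀ r ∈ Set.Ioo a b, 0 < v r)
    (hu'neg : ∀ r ∈ Set.Ioo a b, u' r < 0) (hv'neg : ∀ r ∈ Set.Ioo a b, v' r < 0)
    (hu''neg : ∀ r ∈ Set.Ioo a b, u'' r < 0) (hv''neg : ∀ r ∈ Set.Ioo a b, v'' r < 0)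
    (hODEu : ∀ r ∈ Set.Ioo a b, u'' r + (N - 1) / r * u' r + (v r) ^ p / lam = 0)
    (hODEv : ∀ r ∈ Set.Ioo a b, v'' r + (N - 1) / r * v' r + (u r) ^ q / lam = 0)
    (E : ℝ → ℝ)
    (hE : ∀ r ∈ Set.Ioo a b, E r = r ^ (N : ℝ) *
      (u' r * v' r + (v r) ^ (p + 1) / (lam * (p + 1)) + (u r) ^ (q + 1) / (lam * (q + 1))
        + (N / (p + 1)) * v r * u' r / r + (N / (q + 1)) * u r * v' r / r)) :
    ∀ r ∈ Set.Ioo a b, HasDerivAt E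
      (r ^ ((N : ℝ) - 1) * u' r * v' r * ((N : ℝ) / (p + 1) + (N : ℝ) / (q + 1) - ((N : ℝ) - 2))) r :=
  stmt_17_general N lam p q a b hp hq ha u v u' v' u'' v'' hu hu' hv hv' hupos hvpos hODEu hODEv E
    hE
end
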